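/- arXiv:2411.08784 — 6 statements merged into one kernel-verified Lean document; each statement's English description precedes it below -/
import Mathlib

section
/- In the α-bus stop problem, let S ⊆ V be a solution with maximum element h, let k ∈ V with k > h, and let agent i satisfy ℓᵢ < h and h < k ≤ rᵢ. Then cᵢ(S ∪ {k}) = cᵢ(S) − (1−α)(k−h). -/
open Finset

/-- Cost of an agent with terminals `ℓ < r` for a solution `S` in the α-bus stop problem,
where the bus only travels from left to right: the bus option ranges over pairs of stops
`x ≤ y`. -/
def busCostLR (α ℓ r : ℚ) (S : Finset ℚ) : ℚ :=
  if h : S.Nonempty then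
    min |ℓ - r| (((S ×ˢ S).filter fun p => p.1 ≤ p.2).inf'
      (by obtain ⟨x, hx⟩ := h; exact ⟨(x, x), by simp [hx]⟩)
      fun p => |ℓ - p.1| + α * (p.2 - p.1) + |r - p.2|)
  else |ℓ - r|

/-- If `h = max S`, `k ∈ V` with `k > h`, and agent `i` satisfies `ℓᵢ < h` and
`h < k ≤ rᵢ`, then adding the stop `k` decreases agent `i`'s cost by `(1-α)(k-h)`. -/
theorem stmt_3 (α : ℚ) (h0 : 0 ≤ α) (h1 : α ≤ 1)
    (V S : Finset ℚ) (hSV : S ⊆ V) (hSne : S.Nonempty)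
    (h k : ℚ) (hhS : h ∈ S) (hmax : ∀ x ∈ S, x ≤ h)
    (hkV : k ∈ V) (hk : h < k)
    (ℓ r : ℚ) (hlr : ℓ < r) (hl : ℓ < h) (hkr : k ≤ r) :
    busCostLR α ℓ r (insert k S) = busCostLR α ℓ r S - (1 - α) * (k - h) := by
  classical
  have hS'ne : (insert k S).Nonempty := ⟨k, mem_insert_self _ _⟩
  have hδ : 0 ≤ (1 - α) * (k - h) := mul_nonneg (by linarith) (by linarith)
  have habsr : |ℓ - r| = r - ℓ := by
    rw [abs_of_neg (by linarith : ℓ - r < 0)]; ring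
  set g : ℚ × ℚ → ℚ := fun p => |ℓ - p.1| + α * (p.2 - p.1) + |r - p.2| with hg
  have gh : g (h, h) = r - ℓ := by
    simp only [hg]
    rw [abs_of_neg (by linarith : ℓ - h < 0),
      abs_of_pos (by linarith : (0:ℚ) < r - h)]
    ring
  -- unfold
  rw [busCostLR, busCostLR, dif_pos hS'ne, dif_pos hSne]
  set T := (S ×ˢ S).filter fun p => p.1 ≤ p.2 with hT
  set T' := ((insert k S) ×ˢ (insert k S)).filter fun p => p.1 ≤ p.2 with hT'
  have hTne : T.Nonempty := ⟨(h, h), by simp [hT, hhS]⟩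
  have hT'ne : T'.Nonempty := ⟨(h, h), by simp [hT', hhS]⟩
  have hhhT : (h, h) ∈ T := by simp [hT, hhS]
  have hhhT' : (h, h) ∈ T' := by simp [hT', hhS]
  have hA : T.inf' hTne g ≤ r - ℓ := gh ▸ inf'_le g hhhT
  have hA' : T'.inf' hT'ne g ≤ r - ℓ := gh ▸ inf'_le g hhhT'
  have e2 : min |ℓ - r| (T.inf' hTne g) = T.inf' hTne g :=
    min_eq_right (by rw [habsr]; exact hA)
  have e1 : min |ℓ - r| (T'.inf' hT'ne g) = T'.inf' hT'ne g :=
    min_eq_right (by rw [habsr]; exact hA')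
  have key : T'.inf' hT'ne g = T.inf' hTne g - (1 - α) * (k - h) := by
    apply le_antisymm
    · -- shift best pair's right stop to k
      obtain ⟨p, hp, hpeq⟩ := exists_mem_eq_inf' hTne g
      rw [hT, mem_filter, mem_product] at hp
      obtain ⟨⟨hx, hy⟩, hxy⟩ := hp
      have hyh : p.2 ≤ h := hmax _ hy
      have hxh : p.1 ≤ h := hmax _ hx
      have hxkT' : (p.1, k) ∈ T' :=
        mem_filter.mpr ⟨mem_product.mpr
          ⟨mem_insert_of_mem hx, mem_insert_self k S⟩, by simp; linarith⟩
      have hle : g (p.1, k) ≤ g p - (1 - α) * (k - h) := by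
        simp only [hg]
        rw [abs_of_nonneg (by linarith : (0:ℚ) ≤ r - k),
          abs_of_nonneg (by linarith : (0:ℚ) ≤ r - p.2)]
        nlinarith [mul_nonneg (by linarith : (0:ℚ) ≤ 1 - α)
          (by linarith : (0:ℚ) ≤ h - p.2)]
      calc T'.inf' hT'ne g ≤ g (p.1, k) := inf'_le g hxkT'
        _ ≤ g p - (1 - α) * (k - h) := hle
        _ = T.inf' hTne g - (1 - α) * (k - h) := by rw [hpeq]
    · apply le_inf'
      intro p hp
      rw [hT', mem_filter, mem_product, mem_insert, mem_insert] at hp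
      obtain ⟨⟨hx, hy⟩, hxy⟩ := hp
      rcases hx with hx | hx
      · -- p.1 = k, so p.2 = k
        have hy2 : p.2 = k := by
          rcases hy with hy | hy
          · exact hy
          · exact absurd (hmax _ hy) (by rw [hx] at hxy; linarith)
        have : g p = r - ℓ := by
          simp only [hg, hx, hy2]
          rw [abs_of_neg (by linarith : ℓ - k < 0),
            abs_of_nonneg (by linarith : (0:ℚ) ≤ r - k)]
          ring
        rw [this]
        linarith
      · rcases hy with hy | hy
        · -- p.2 = k : compare with (p.1, h)
          have hxh : p.1 ≤ h := hmax _ hx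
          have hxhT : (p.1, h) ∈ T := by
            simp only [hT, mem_filter, mem_product]
            exact ⟨⟨hx, hhS⟩, hxh⟩
          have : g (p.1, h) = g p + (1 - α) * (k - h) := by
            simp only [hg, hy]
            rw [abs_of_nonneg (by linarith : (0:ℚ) ≤ r - k),
              abs_of_nonneg (by linarith : (0:ℚ) ≤ r - h)]
            ring
          have h2 := inf'_le g hxhT
          linarith
        · -- both in S
          have hpT : p ∈ T := by
            simp only [hT, mem_filter, mem_product]
            exact ⟨⟨hx, hy⟩, hxy⟩
          have := inf'_le g hpT
          linarith
  -- the `inf'` proofs in the goal are proof-irrelevant; convert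
  calc min |ℓ - r| (T'.inf' hT'ne g) = T'.inf' hT'ne g := e1
    _ = T.inf' hTne g - (1 - α) * (k - h) := key
    _ = min |ℓ - r| (T.inf' hTne g) - (1 - α) * (k - h) := by rw [e2]
end

section
/- In the α-bus stop problem, let S ⊆ V be a solution with maximum element h, let k ∈ V with k > h, and let agent i satisfy h ≤ ℓᵢ < rᵢ < k and S ∩ (ℓᵢ, rᵢ) = ∅. Then cᵢ(S ∪ {k}) = cᵢ(S) − max{0, 2(rᵢ − ℓᵢ) − (1+α)(k−h)}. -/
open Finset

/-- If `h = max S`, `k ∈ V` with `k > h`, agent `i` satisfies `h ≤ ℓᵢ < rᵢ < k`, and no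
stop of `S` lies strictly between `ℓᵢ` and `rᵢ`, then adding the stop `k` decreases agent
`i`'s cost by `max {0, 2(rᵢ-ℓᵢ) - (1+α)(k-h)}`. -/
theorem stmt_4 (α : ℚ) (h0 : 0 ≤ α) (h1 : α ≤ 1)
    (V S : Finset ℚ) (hSV : S ⊆ V) (hSne : S.Nonempty)
    (h k : ℚ) (hhS : h ∈ S) (hmax : ∀ x ∈ S, x ≤ h)
    (hkV : k ∈ V) (hk : h < k)
    (ℓ r : ℚ) (hlr : ℓ < r) (hhl : h ≤ ℓ) (hrk : r < k)
    (hgap : ∀ s ∈ S, ¬ (ℓ < s ∧ s < r)) :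
    busCostLR α ℓ r (insert k S)
      = busCostLR α ℓ r S - max 0 (2 * (r - ℓ) - (1 + α) * (k - h)) := by
  have habs : |ℓ - r| = r - ℓ := by rw [abs_of_nonpos (by linarith)]; ring
  have hne2 : (insert k S).Nonempty := ⟨k, mem_insert_self _ _⟩
  rw [busCostLR, busCostLR, dif_pos hSne, dif_pos hne2, habs]
  set f : ℚ × ℚ → ℚ := fun p => |ℓ - p.1| + α * (p.2 - p.1) + |r - p.2| with hf
  set B : ℚ := (ℓ - h) + α * (k - h) + (k - r) with hB
  -- old inf' is at least r - ℓ
  have hold : r - ℓ ≤ ((S ×ˢ S).filter fun p => p.1 ≤ p.2).inf'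
      (by obtain ⟨x, hx⟩ := hSne; exact ⟨(x, x), by simp [hx]⟩) f := by
    apply Finset.le_inf'
    intro p hp
    simp only [mem_filter, mem_product] at hp
    obtain ⟨⟨hx, hy⟩, hxy⟩ := hp
    have hxh := hmax _ hx
    have hyh := hmax _ hy
    have e1 : |ℓ - p.1| = ℓ - p.1 := abs_of_nonneg (by linarith)
    have e2 : |r - p.2| = r - p.2 := abs_of_nonneg (by linarith)
    simp only [hf, e1, e2]
    nlinarith [mul_nonneg (by linarith : (0:ℚ) ≤ 1 - α) (by linarith : (0:ℚ) ≤ ℓ - p.2),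
      mul_nonneg (by linarith : (0:ℚ) ≤ 1 + α) (by linarith : (0:ℚ) ≤ ℓ - p.1)]
  rw [min_eq_left hold]
  -- new inf'
  have hmem : ((h, k) : ℚ × ℚ) ∈ ((insert k S ×ˢ insert k S).filter fun p => p.1 ≤ p.2) := by
    simp only [mem_filter, mem_product, mem_insert]
    simp [hhS, hk.le]
  have hub : (((insert k S) ×ˢ (insert k S)).filter fun p => p.1 ≤ p.2).inf'
      ⟨_, hmem⟩ f ≤ B := by
    refine le_trans (Finset.inf'_le f hmem) ?_
    have e1 : |ℓ - h| = ℓ - h := abs_of_nonneg (by linarith)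
    have e2 : |r - k| = k - r := by rw [abs_of_nonpos (by linarith)]; ring
    simp only [hf]
    rw [e1, e2]
  have hlb : min (r - ℓ) B ≤ (((insert k S) ×ˢ (insert k S)).filter fun p => p.1 ≤ p.2).inf'
      ⟨_, hmem⟩ f := by
    apply Finset.le_inf'
    intro p hp
    simp only [mem_filter, mem_product, mem_insert] at hp
    obtain ⟨⟨hx, hy⟩, hxy⟩ := hp
    rcases hx with hx | hx
    · -- p.1 = k, so p.2 = k
      rcases hy with hy | hy
      · have e1 : |ℓ - p.1| = p.1 - ℓ := by rw [abs_of_nonpos (by rw [hx]; linarith)]; ring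
        have e2 : |r - p.2| = p.2 - r := by rw [abs_of_nonpos (by rw [hy]; linarith)]; ring
        refine le_trans (min_le_left _ _) ?_
        simp only [hf]
        rw [e1, e2, hx, hy]
        linarith
      · have := hmax _ hy
        exfalso; rw [hx] at hxy; linarith
    · rcases hy with hy | hy
      · -- p.2 = k, p.1 ∈ S
        have hxh := hmax _ hx
        have e1 : |ℓ - p.1| = ℓ - p.1 := abs_of_nonneg (by linarith)
        have e2 : |r - p.2| = p.2 - r := by rw [abs_of_nonpos (by rw [hy]; linarith)]; ring
        refine le_trans (min_le_right _ _) ?_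
        simp only [hf]
        rw [e1, e2, hy, hB]
        nlinarith [mul_nonneg (by linarith : (0:ℚ) ≤ 1 + α) (by linarith : (0:ℚ) ≤ h - p.1)]
      · -- both in S
        have hxh := hmax _ hx
        have hyh := hmax _ hy
        have e1 : |ℓ - p.1| = ℓ - p.1 := abs_of_nonneg (by linarith)
        have e2 : |r - p.2| = r - p.2 := abs_of_nonneg (by linarith)
        refine le_trans (min_le_left _ _) ?_
        simp only [hf, e1, e2]
        nlinarith [mul_nonneg (by linarith : (0:ℚ) ≤ 1 - α) (by linarith : (0:ℚ) ≤ ℓ - p.2),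
          mul_nonneg (by linarith : (0:ℚ) ≤ 1 + α) (by linarith : (0:ℚ) ≤ ℓ - p.1)]
  have hmin : min (r - ℓ) ((((insert k S) ×ˢ (insert k S)).filter fun p => p.1 ≤ p.2).inf'
      ⟨_, hmem⟩ f) = min (r - ℓ) B := by
    apply le_antisymm
    · exact le_min (min_le_left _ _) (le_trans (min_le_right _ _) hub)
    · exact le_min (min_le_left _ _) (le_trans hlb (le_refl _))
  rw [hmin]
  rcases le_total (2 * (r - ℓ)) ((1 + α) * (k - h)) with hc | hc
  · rw [max_eq_left (by linarith), min_eq_left (by rw [hB]; nlinarith)]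
    ring
  · rw [min_eq_right (by rw [hB]; nlinarith), max_eq_right (by linarith)]
    rw [hB]; ring
end

section
/- For every α ∈ [0,1] and every instance of the α-bus stop problem in which all agents' terminals belong to the set V of potential stops, there exists a feasible solution of minimum total cost that is a subset of the set of agents' terminal points. -/
open Finset

/-- Cost of an agent with terminals `ℓ < r` for a solution `S` in the α-bus stop problem. -/
def busCost (α ℓ r : ℚ) (S : Finset ℚ) : ℚ :=
  if h : S.Nonempty then
    min |ℓ - r| ((S ×ˢ S).inf' (h.product h)
      fun p => |ℓ - p.1| + α * |p.1 - p.2| + |r - p.2|)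
  else |ℓ - r|

/-- Total cost of a solution. -/
def totalCost (α : ℚ) {n : ℕ} (l r : Fin n → ℚ) (S : Finset ℚ) : ℚ :=
  ∑ i, busCost α (l i) (r i) S

/-- A solution `S` provides justified representation: for every coalition `M` of size at
least `2n/b` and every pair of stops `T ⊆ V`, some member of `M` is at least as well off
under `S` as under `T`. -/
def providesJR (α : ℚ) {n : ℕ} (l r : Fin n → ℚ) (V : Finset ℚ) (b : ℕ)
    (S : Finset ℚ) : Prop :=
  ∀ M : Finset (Fin n), (2 * n : ℚ) / b ≤ M.card →
    ∀ T ⊆ V, T.card = 2 →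
      ∃ i ∈ M, busCost α (l i) (r i) S ≤ busCost α (l i) (r i) T


lemma busCost_eq (α ℓ r : ℚ) {S : Finset ℚ} (hS : S.Nonempty) :
    busCost α ℓ r S = min |ℓ - r| ((S ×ˢ S).inf' (hS.product hS)
      fun p => |ℓ - p.1| + α * |p.1 - p.2| + |r - p.2|) := by
  unfold busCost
  rw [dif_pos hS]

lemma busCost_le_walk (α ℓ r : ℚ) (S : Finset ℚ) : busCost α ℓ r S ≤ |ℓ - r| := by
  unfold busCost
  split
  · exact min_le_left _ _
  · exact le_refl _

lemma busCost_le_pair (α ℓ r : ℚ) {S : Finset ℚ} {x y : ℚ} (hx : x ∈ S) (hy : y ∈ S) :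
    busCost α ℓ r S ≤ |ℓ - x| + α * |x - y| + |r - y| := by
  have hS : S.Nonempty := ⟨x, hx⟩
  rw [busCost_eq α ℓ r hS]
  refine le_trans (min_le_right _ _) ?_
  have hmem : ((x, y) : ℚ × ℚ) ∈ S ×ˢ S := mem_product.mpr ⟨hx, hy⟩
  exact Finset.inf'_le (fun p : ℚ × ℚ => |ℓ - p.1| + α * |p.1 - p.2| + |r - p.2|) hmem

/-- Weighted median lemma: a nonnegative weighted sum of distances to anchors in `A`
is minimized (relative to any point `s`) at some point of `A`. -/
lemma median_step {ι : Type*} [Fintype ι] (w a : ι → ℚ) (hw : ∀ j, 0 ≤ w j)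
    (A : Finset ℚ) (hA : A.Nonempty) (haA : ∀ j, a j ∈ A) (s : ℚ) :
    ∃ p ∈ A, (∑ j, w j * |p - a j|) ≤ ∑ j, w j * |s - a j| := by
  by_cases hminus : (A.filter (· ≤ s)).Nonempty
  · by_cases hplus : (A.filter (s ≤ ·)).Nonempty
    · obtain ⟨p, hpf, hpmax⟩ := Finset.exists_max_image (A.filter (· ≤ s)) id hminus
      obtain ⟨q, hqf, hqmin⟩ := Finset.exists_min_image (A.filter (s ≤ ·)) id hplus
      simp only [mem_filter] at hpf hqf
      obtain ⟨hpA, hps⟩ := hpf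
      obtain ⟨hqA, hsq⟩ := hqf
      have hsplit : ∀ j, a j ≤ p ∨ q ≤ a j := by
        intro j
        rcases le_total (a j) s with h | h
        · exact Or.inl (hpmax (a j) (by simp only [mem_filter]; exact ⟨haA j, h⟩))
        · exact Or.inr (hqmin (a j) (by simp only [mem_filter]; exact ⟨haA j, h⟩))
      set σ : ι → ℚ := fun j => if a j ≤ p then w j else -w j with hσ
      have key : ∀ t, p ≤ t → t ≤ q →
          (∑ j, w j * |t - a j|) = (∑ j, σ j) * t - ∑ j, σ j * a j := by
        intro t hpt htq
        rw [Finset.sum_mul, ← Finset.sum_sub_distrib]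
        apply Finset.sum_congr rfl
        intro j _
        by_cases h : a j ≤ p
        · simp only [hσ, if_pos h]
          rw [abs_of_nonneg (by linarith)]
          ring
        · have hqa : q ≤ a j := (hsplit j).resolve_left h
          simp only [hσ, if_neg h]
          rw [abs_of_nonpos (by linarith)]
          ring
      rcases le_or_gt 0 (∑ j, σ j) with hσ0 | hσ0
      · refine ⟨p, hpA, ?_⟩
        rw [key p le_rfl (le_trans hps hsq), key s hps hsq]
        nlinarith
      · refine ⟨q, hqA, ?_⟩
        rw [key q (le_trans hps hsq) le_rfl, key s hps hsq]
        nlinarith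
    · rw [Finset.not_nonempty_iff_eq_empty, Finset.filter_eq_empty_iff] at hplus
      obtain ⟨p, hpA, hpmax⟩ := Finset.exists_max_image A id hA
      refine ⟨p, hpA, ?_⟩
      apply Finset.sum_le_sum
      intro j _
      have h1 : a j ≤ p := hpmax (a j) (haA j)
      have h2 : ¬ s ≤ p := hplus hpA
      push_neg at h2
      have h3 := hw j
      rw [abs_of_nonneg (by linarith), abs_of_nonneg (by linarith)]
      nlinarith
  · rw [Finset.not_nonempty_iff_eq_empty, Finset.filter_eq_empty_iff] at hminus
    obtain ⟨q, hqA, hqmin⟩ := Finset.exists_min_image A id hA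
    refine ⟨q, hqA, ?_⟩
    apply Finset.sum_le_sum
    intro j _
    have h1 : q ≤ a j := hqmin (a j) (haA j)
    have h2 : ¬ q ≤ s := hminus hqA
    push_neg at h2
    have h3 := hw j
    rw [abs_of_nonpos (by linarith), abs_of_nonpos (by linarith)]
    nlinarith

/-- Decomposition of an agent's cost as a weighted sum of distances to anchors,
as a function of the position of a single stop `s ∈ S`. -/
lemma agent_decomp (α : ℚ) (h0 : 0 ≤ α) (ℓ r : ℚ) (S : Finset ℚ) (s : ℚ) (hs : s ∈ S) :
    ∃ (c : ℚ) (w a : Fin 3 → ℚ), (∀ k, 0 ≤ w k) ∧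
      (∀ k, a k = ℓ ∨ a k = r ∨ a k ∈ S.erase s) ∧
      c + (∑ k, w k * |s - a k|) ≤ busCost α ℓ r S ∧
      ∀ t, busCost α ℓ r (insert t (S.erase s)) ≤ c + ∑ k, w k * |t - a k| := by
  have hS : S.Nonempty := ⟨s, hs⟩
  have hbc := busCost_eq α ℓ r hS
  rcases le_total |ℓ - r|
      ((S ×ˢ S).inf' (hS.product hS)
        fun p => |ℓ - p.1| + α * |p.1 - p.2| + |r - p.2|) with hcase | hcase
  · refine ⟨|ℓ - r|, ![0, 0, 0], ![ℓ, ℓ, ℓ], ?_, ?_, ?_, ?_⟩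
    · intro k; fin_cases k <;> norm_num
    · intro k; fin_cases k <;> simp
    · rw [hbc, min_eq_left hcase, Fin.sum_univ_three]
      norm_num [Matrix.cons_val_two]
    · intro t
      refine le_trans (busCost_le_walk α ℓ r _) ?_
      rw [Fin.sum_univ_three]
      norm_num [Matrix.cons_val_two]
  · obtain ⟨⟨x, y⟩, hxyS, hfeq⟩ := Finset.exists_mem_eq_inf' (hS.product hS)
      (fun p : ℚ × ℚ => |ℓ - p.1| + α * |p.1 - p.2| + |r - p.2|)
    obtain ⟨hxS, hyS⟩ := mem_product.mp hxyS
    have hbc2 : busCost α ℓ r S = |ℓ - x| + α * |x - y| + |r - y| := by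
      rw [hbc, min_eq_right hcase]; exact hfeq
    by_cases hx : x = s <;> by_cases hy : y = s
    · -- x = s, y = s
      rw [hx, hy] at hbc2
      refine ⟨0, ![1, 1, 0], ![ℓ, r, ℓ], ?_, ?_, ?_, ?_⟩
      · intro k; fin_cases k <;> norm_num
      · intro k; fin_cases k <;> simp
      · rw [hbc2, Fin.sum_univ_three]
        simp only [Matrix.cons_val_zero, Matrix.cons_val_one, Matrix.head_cons,
          Matrix.cons_val_two, Matrix.tail_cons, sub_self, abs_zero, mul_zero,
          one_mul, zero_mul, add_zero, zero_add]
        linarith [abs_sub_comm s ℓ, abs_sub_comm s r]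
      · intro t
        refine le_trans (busCost_le_pair α ℓ r (x := t) (y := t)
          (mem_insert_self _ _) (mem_insert_self _ _)) ?_
        rw [Fin.sum_univ_three]
        simp only [Matrix.cons_val_zero, Matrix.cons_val_one, Matrix.head_cons,
          Matrix.cons_val_two, Matrix.tail_cons, sub_self, abs_zero, mul_zero,
          one_mul, zero_mul, add_zero, zero_add]
        linarith [abs_sub_comm t ℓ, abs_sub_comm t r]
    · -- x = s, y ≠ s
      rw [hx] at hbc2
      have hy' : y ∈ S.erase s := mem_erase.mpr ⟨hy, hyS⟩
      refine ⟨|r - y|, ![1, α, 0], ![ℓ, y, ℓ], ?_, ?_, ?_, ?_⟩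
      · intro k; fin_cases k <;> simp [h0]
      · intro k
        fin_cases k
        · exact Or.inl rfl
        · exact Or.inr (Or.inr hy')
        · exact Or.inl rfl
      · rw [hbc2, Fin.sum_univ_three]
        simp only [Matrix.cons_val_zero, Matrix.cons_val_one, Matrix.head_cons,
          Matrix.cons_val_two, Matrix.tail_cons, one_mul, zero_mul, add_zero]
        linarith [abs_sub_comm s ℓ]
      · intro t
        refine le_trans (busCost_le_pair α ℓ r (x := t) (y := y)
          (mem_insert_self _ _) (mem_insert_of_mem hy')) ?_
        rw [Fin.sum_univ_three]
        simp only [Matrix.cons_val_zero, Matrix.cons_val_one, Matrix.head_cons,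
          Matrix.cons_val_two, Matrix.tail_cons, one_mul, zero_mul, add_zero]
        linarith [abs_sub_comm t ℓ]
    · -- x ≠ s, y = s
      rw [hy, abs_sub_comm x s] at hbc2
      have hx' : x ∈ S.erase s := mem_erase.mpr ⟨hx, hxS⟩
      refine ⟨|ℓ - x|, ![α, 1, 0], ![x, r, x], ?_, ?_, ?_, ?_⟩
      · intro k; fin_cases k <;> simp [h0]
      · intro k
        fin_cases k
        · exact Or.inr (Or.inr hx')
        · exact Or.inr (Or.inl rfl)
        · exact Or.inr (Or.inr hx')
      · rw [hbc2, Fin.sum_univ_three]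
        simp only [Matrix.cons_val_zero, Matrix.cons_val_one, Matrix.head_cons,
          Matrix.cons_val_two, Matrix.tail_cons, one_mul, zero_mul, add_zero]
        linarith [abs_sub_comm s r]
      · intro t
        refine le_trans (busCost_le_pair α ℓ r (x := x) (y := t)
          (mem_insert_of_mem hx') (mem_insert_self _ _)) ?_
        rw [abs_sub_comm x t, abs_sub_comm r t, Fin.sum_univ_three]
        simp only [Matrix.cons_val_zero, Matrix.cons_val_one, Matrix.head_cons,
          Matrix.cons_val_two, Matrix.tail_cons, one_mul, zero_mul, add_zero]
        linarith
    · -- x ≠ s, y ≠ s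
      have hx' : x ∈ S.erase s := mem_erase.mpr ⟨hx, hxS⟩
      have hy' : y ∈ S.erase s := mem_erase.mpr ⟨hy, hyS⟩
      refine ⟨|ℓ - x| + α * |x - y| + |r - y|, ![0, 0, 0], ![ℓ, ℓ, ℓ], ?_, ?_, ?_, ?_⟩
      · intro k; fin_cases k <;> norm_num
      · intro k; fin_cases k <;> simp
      · rw [hbc2, Fin.sum_univ_three]
        norm_num [Matrix.cons_val_two]
      · intro t
        refine le_trans (busCost_le_pair α ℓ r (x := x) (y := y)
          (mem_insert_of_mem hx') (mem_insert_of_mem hy')) ?_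
        rw [Fin.sum_univ_three]
        norm_num [Matrix.cons_val_two]

lemma step_lemma (α : ℚ) (h0 : 0 ≤ α) {n : ℕ} (l r : Fin n → ℚ)
    (T : Finset ℚ) (hT : T = Finset.image l Finset.univ ∪ Finset.image r Finset.univ)
    (hTne : T.Nonempty)
    (S : Finset ℚ) (s : ℚ) (hs : s ∈ S) :
    ∃ p ∈ T ∪ S.erase s,
      totalCost α l r (insert p (S.erase s)) ≤ totalCost α l r S := by
  choose c w a hw ha h1 h2 using fun i => agent_decomp α h0 (l i) (r i) S s hs
  have hAne : (T ∪ S.erase s).Nonempty := hTne.mono subset_union_left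
  have haA : ∀ j : Fin n × Fin 3, a j.1 j.2 ∈ T ∪ S.erase s := by
    rintro ⟨i, k⟩
    rcases ha i k with h | h | h
    · refine mem_union_left _ ?_
      rw [hT]
      exact mem_union_left _ (h ▸ mem_image_of_mem l (mem_univ i))
    · refine mem_union_left _ ?_
      rw [hT]
      exact mem_union_right _ (h ▸ mem_image_of_mem r (mem_univ i))
    · exact mem_union_right _ h
  obtain ⟨p, hpA, hsum⟩ := median_step (fun j : Fin n × Fin 3 => w j.1 j.2)
    (fun j : Fin n × Fin 3 => a j.1 j.2) (fun j => hw j.1 j.2)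
    (T ∪ S.erase s) hAne haA s
  refine ⟨p, hpA, ?_⟩
  rw [Fintype.sum_prod_type, Fintype.sum_prod_type] at hsum
  calc totalCost α l r (insert p (S.erase s))
      ≤ ∑ i, (c i + ∑ k, w i k * |p - a i k|) := Finset.sum_le_sum fun i _ => h2 i p
    _ = (∑ i, c i) + ∑ i, ∑ k, w i k * |p - a i k| := Finset.sum_add_distrib
    _ ≤ (∑ i, c i) + ∑ i, ∑ k, w i k * |s - a i k| := by linarith
    _ = ∑ i, (c i + ∑ k, w i k * |s - a i k|) := Finset.sum_add_distrib.symm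
    _ ≤ ∑ i, busCost α (l i) (r i) S := Finset.sum_le_sum fun i _ => h1 i
    _ = totalCost α l r S := rfl

lemma reduce_lemma (α : ℚ) (h0 : 0 ≤ α) {n : ℕ} (l r : Fin n → ℚ)
    (T : Finset ℚ) (hT : T = Finset.image l Finset.univ ∪ Finset.image r Finset.univ)
    (hTne : T.Nonempty) :
    ∀ m : ℕ, ∀ S : Finset ℚ, S.card + (S \ T).card ≤ m →
      ∃ S₀, S₀ ⊆ T ∧ S₀.card ≤ S.card ∧ totalCost α l r S₀ ≤ totalCost α l r S := by
  intro m
  induction m with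
  | zero =>
    intro S hμ
    have hc : S.card = 0 := by omega
    rw [card_eq_zero] at hc
    subst hc
    exact ⟨∅, empty_subset _, le_rfl, le_rfl⟩
  | succ m ih =>
    intro S hμ
    by_cases hST : S ⊆ T
    · exact ⟨S, hST, le_rfl, le_rfl⟩
    · obtain ⟨s, hsS, hsT⟩ := not_subset.mp hST
      obtain ⟨p, hpA, hcost⟩ := step_lemma α h0 l r T hT hTne S s hsS
      set S' := insert p (S.erase s) with hS'
      have hSpos : 0 < S.card := card_pos.mpr ⟨s, hsS⟩
      have hcard : S'.card ≤ S.card := by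
        refine le_trans (card_insert_le _ _) ?_
        rw [card_erase_of_mem hsS]
        omega
      have hμ' : S'.card + (S' \ T).card ≤ m := by
        rcases mem_union.mp hpA with hpT | hpE
        · have hsub : S' \ T ⊆ (S \ T).erase s := by
            intro x hx
            rw [mem_sdiff] at hx
            obtain ⟨hx1, hx2⟩ := hx
            rcases mem_insert.mp hx1 with rfl | hx1'
            · exact absurd hpT hx2
            · exact mem_erase.mpr ⟨(mem_erase.mp hx1').1,
                mem_sdiff.mpr ⟨(mem_erase.mp hx1').2, hx2⟩⟩
          have h4 : s ∈ S \ T := mem_sdiff.mpr ⟨hsS, hsT⟩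
          have h5 : 0 < (S \ T).card := card_pos.mpr ⟨s, h4⟩
          have h6 : (S' \ T).card ≤ ((S \ T).erase s).card := card_le_card hsub
          rw [card_erase_of_mem h4] at h6
          omega
        · have hcard' : S'.card < S.card := by
            rw [hS', insert_eq_self.mpr hpE, card_erase_of_mem hsS]
            omega
          have hsub : S' \ T ⊆ S \ T := by
            rw [hS', insert_eq_self.mpr hpE]
            exact sdiff_subset_sdiff (erase_subset _ _) Subset.rfl
          have h6 : (S' \ T).card ≤ (S \ T).card := card_le_card hsub
          omega
      obtain ⟨S₀, hS₀T, hS₀card, hS₀cost⟩ := ih S' hμ'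
      exact ⟨S₀, hS₀T, le_trans hS₀card hcard, le_trans hS₀cost hcost⟩

/-- If all agents' terminals belong to `V`, there is a feasible minimum-total-cost
solution consisting only of agents' terminal points. -/
theorem stmt_5 (α : ℚ) (h0 : 0 ≤ α) (h1 : α ≤ 1) (n b : ℕ) (V : Finset ℚ)
    (l r : Fin n → ℚ) (hlr : ∀ i, l i < r i)
    (hlV : ∀ i, l i ∈ V) (hrV : ∀ i, r i ∈ V) :
    ∃ S : Finset ℚ,
      S ⊆ (Finset.image l Finset.univ ∪ Finset.image r Finset.univ) ∧
      S ⊆ V ∧ S.card ≤ b ∧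
      ∀ S' : Finset ℚ, S' ⊆ V → S'.card ≤ b →
        totalCost α l r S ≤ totalCost α l r S' := by
  rcases Nat.eq_zero_or_pos n with rfl | hn
  · refine ⟨∅, empty_subset _, empty_subset _, by simp, fun S' _ _ => ?_⟩
    simp [totalCost]
  · set T := Finset.image l Finset.univ ∪ Finset.image r Finset.univ with hT
    have hTV : T ⊆ V := by
      rw [hT]
      apply union_subset
      · intro x hx
        obtain ⟨i, _, rfl⟩ := mem_image.mp hx
        exact hlV i
      · intro x hx
        obtain ⟨i, _, rfl⟩ := mem_image.mp hx
        exact hrV i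
    have hTne : T.Nonempty :=
      ⟨l ⟨0, hn⟩, by rw [hT]; exact mem_union_left _ (mem_image_of_mem _ (mem_univ _))⟩
    have hfeas : (V.powerset.filter fun S => S.card ≤ b).Nonempty :=
      ⟨∅, mem_filter.mpr ⟨empty_mem_powerset V, by simp⟩⟩
    obtain ⟨S₁, hS₁mem, hS₁min⟩ := Finset.exists_min_image _ (totalCost α l r) hfeas
    rw [mem_filter, mem_powerset] at hS₁mem
    obtain ⟨S₀, hS₀T, hS₀card, hS₀cost⟩ := reduce_lemma α h0 l r T hT hTne
      (S₁.card + (S₁ \ T).card) S₁ le_rfl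
    refine ⟨S₀, hT ▸ hS₀T, hS₀T.trans hTV, le_trans hS₀card hS₁mem.2, ?_⟩
    intro S' hS'V hS'b
    exact le_trans hS₀cost (hS₁min S' (mem_filter.mpr ⟨mem_powerset.mpr hS'V, hS'b⟩))
end

section
/- Consider the 0-bus stop problem (α = 0). Let S ⊆ V be any solution, M ⊆ N a coalition, T ⊆ V a set of stops with cᵢ(T) < cᵢ(S) for all i ∈ M, and i ∈ M an agent who under T walks from ℓᵢ to ℓ' ∈ T, rides the bus from ℓ' to r' ∈ T, and walks from r' to rᵢ, with cᵢ(T) = |ℓᵢ − ℓ'| + |rᵢ − r'|. If there exists ℓ ∈ S with ℓᵢ ≤ ℓ ≤ ℓ' or ℓ' ≤ ℓ ≤ ℓᵢ, then for every r ∈ S it holds that |ℓ − ℓ'| < |r − r'|. -/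
open Finset

/-- Lemma for the 0-bus stop problem: if agent `i` strictly prefers `T` to `S`, under `T`
walks from `ℓᵢ` to `ℓ' ∈ T`, rides the bus to `r' ∈ T` and walks to `rᵢ` (so that
`cᵢ(T) = |ℓᵢ-ℓ'| + |rᵢ-r'|`), and some `ℓ ∈ S` lies between `ℓᵢ` and `ℓ'`, then for every
`x ∈ S` we have `|ℓ-ℓ'| < |x-r'|`. -/
theorem stmt_7 (li ri : ℚ) (hlr : li < ri) (S T : Finset ℚ)
    (l' r' : ℚ) (hl'T : l' ∈ T) (hr'T : r' ∈ T)
    (hroute : busCost 0 li ri T = |li - l'| + |ri - r'|)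
    (hbetter : busCost 0 li ri T < busCost 0 li ri S)
    (ℓ : ℚ) (hℓS : ℓ ∈ S)
    (hbetween : (li ≤ ℓ ∧ ℓ ≤ l') ∨ (l' ≤ ℓ ∧ ℓ ≤ li)) :
    ∀ x ∈ S, |ℓ - l'| < |x - r'| := by
  intro x hxS
  by_contra hcon
  push_neg at hcon
  have hS : S.Nonempty := ⟨ℓ, hℓS⟩
  have hmem : (ℓ, x) ∈ S ×ˢ S := mem_product.2 ⟨hℓS, hxS⟩
  have h1 : busCost 0 li ri S ≤ |li - ℓ| + 0 * |ℓ - x| + |ri - x| := by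
    rw [busCost, dif_pos hS]
    exact le_trans (min_le_right _ _) (inf'_le _ hmem)
  have hsplit : |li - ℓ| + |ℓ - l'| = |li - l'| := by
    rcases hbetween with ⟨h1, h2⟩ | ⟨h1, h2⟩
    · rw [abs_of_nonpos (by linarith), abs_of_nonpos (by linarith),
        abs_of_nonpos (by linarith)]; ring
    · rw [abs_of_nonneg (by linarith), abs_of_nonneg (by linarith),
        abs_of_nonneg (by linarith)]; ring
  have htri : |ri - x| ≤ |ri - r'| + |x - r'| := by
    calc |ri - x| = |(ri - r') - (x - r')| := by ring_nf
    _ ≤ |ri - r'| + |x - r'| := abs_sub _ _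
  rw [hroute] at hbetter
  linarith
end

section
/- Let α ∈ (0,1). Then there exists an instance of the α-bus stop problem on which the proportional-density algorithm returns a solution that fails justified representation. Concretely, with λ = 2(1+α)/(1−α) + 1, 4 agents with budget b = 4, stops V = {0, λ+4} ∪ {λ+j, −λ−j : j = 0,1,2,3}, and types θ₁ = (−3−λ, λ), θ₂ = (−λ, λ+3), θ₃ = (−2−λ, λ+2), θ₄ = (0, λ+4), the algorithm outputs S = {−2−λ, 0, λ+2, λ+4}, and the coalition M = {1,2} with T = {−1−λ, λ+1} satisfies |M| ≥ 2n/b and cᵢ(T) < cᵢ(S) for both i ∈ M. -/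
open Finset

/-- The number of agent terminals (with multiplicity) that lie at or to the left of `v`. -/
def xcount {n : ℕ} (l r : Fin n → ℚ) (v : ℚ) : ℕ :=
  (Finset.univ.filter fun i => l i ≤ v).card + (Finset.univ.filter fun i => r i ≤ v).card

lemma agent_bound (α lam ℓ rr : ℚ) (h0 : 0 < α) (hlam3 : 3 < lam)
    (hmul : α * lam = lam - 3 - α)
    (S T : Finset ℚ)
    (hS : S = {-2 - lam, 0, lam + 2, lam + 4}) (hT : T = {-1 - lam, lam + 1})
    (hcase : (ℓ = -3 - lam ∧ rr = lam) ∨ (ℓ = -lam ∧ rr = lam + 3)) :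
    busCost α ℓ rr T < busCost α ℓ rr S := by
  subst hS hT
  have hTne : ({-1 - lam, lam + 1} : Finset ℚ).Nonempty := insert_nonempty _ _
  have hSne : ({-2 - lam, 0, lam + 2, lam + 4} : Finset ℚ).Nonempty := insert_nonempty _ _
  unfold busCost
  rw [dif_pos hTne, dif_pos hSne]
  have hmem : ((-1 - lam, lam + 1) : ℚ × ℚ) ∈
      ({-1 - lam, lam + 1} : Finset ℚ) ×ˢ ({-1 - lam, lam + 1} : Finset ℚ) := by
    rw [Finset.mem_product]; constructor <;> simp
  refine lt_of_le_of_lt (b := 2 * lam - 3) (le_trans (min_le_right _ _)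
    (le_trans (Finset.inf'_le _ hmem) ?_)) (lt_min ?_ ?_)
  · dsimp only
    rcases hcase with ⟨rfl, rfl⟩ | ⟨rfl, rfl⟩
    · rw [abs_of_nonpos (by linarith), abs_of_nonpos (by linarith),
        abs_of_nonpos (by linarith)]
      linarith [hmul]
    · rw [abs_of_nonneg (by linarith), abs_of_nonpos (by linarith),
        abs_of_nonneg (by linarith)]
      linarith [hmul]
  · have := neg_le_abs (ℓ - rr)
    rcases hcase with ⟨rfl, rfl⟩ | ⟨rfl, rfl⟩ <;> linarith
  · rw [Finset.lt_inf'_iff]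
    rintro ⟨x, y⟩ hp
    rw [Finset.mem_product] at hp
    obtain ⟨hx, hy⟩ := hp
    simp only [Finset.mem_insert, Finset.mem_singleton] at hx hy
    have A1 := le_abs_self (ℓ - x)
    have A2 := neg_le_abs (ℓ - x)
    have C1 := le_abs_self (rr - y)
    have C2 := neg_le_abs (rr - y)
    have B1 : α * (x - y) ≤ α * |x - y| :=
      mul_le_mul_of_nonneg_left (le_abs_self _) h0.le
    have B2 : α * (y - x) ≤ α * |x - y| := by
      rw [abs_sub_comm]; exact mul_le_mul_of_nonneg_left (le_abs_self _) h0.le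
    rcases hcase with ⟨rfl, rfl⟩ | ⟨rfl, rfl⟩ <;>
      rcases hx with rfl | rfl | rfl | rfl <;> rcases hy with rfl | rfl | rfl | rfl <;>
      dsimp only <;> linarith [hmul]

set_option maxHeartbeats 2000000 in
/-- For `α ∈ (0,1)` the proportional-density algorithm can fail JR: with
`λ = 2(1+α)/(1-α) + 1`, 4 agents, budget 4, stops
`V = {0, λ+4} ∪ {λ+j, -λ-j : j = 0,1,2,3}` and types
`(-3-λ, λ), (-λ, λ+3), (-2-λ, λ+2), (0, λ+4)`, the algorithm outputs
`S = {-2-λ, 0, λ+2, λ+4}`, while `M = {1,2}` (with `|M| = 2 ≥ 2n/b`) and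
`T = {-1-λ, λ+1}` witness a JR violation. -/
theorem stmt_12 (α : ℚ) (h0 : 0 < α) (h1 : α < 1)
    (lam : ℚ) (hlam : lam = 2 * (1 + α) / (1 - α) + 1)
    (V : Finset ℚ)
    (hV : V = {0, lam + 4, lam, lam + 1, lam + 2, lam + 3,
               -lam, -lam - 1, -lam - 2, -lam - 3})
    (l r : Fin 4 → ℚ)
    (hl : l = ![-3 - lam, -lam, -2 - lam, 0])
    (hr : r = ![lam, lam + 3, lam + 2, lam + 4])
    (S T : Finset ℚ)
    (hS : S = {-2 - lam, 0, lam + 2, lam + 4})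
    (hT : T = {-1 - lam, lam + 1}) :
    (∃ s : ℕ → ℚ,
      (∀ k ∈ Finset.Icc 1 4, s k ∈ V ∧ k * (2 * 4 / 4) ≤ xcount l r (s k) ∧
        ∀ v ∈ V, k * (2 * 4 / 4) ≤ xcount l r v → s k ≤ v) ∧
      (Finset.Icc 1 4).image s = S) ∧
    (2 * 4 : ℚ) / 4 ≤ (({0, 1} : Finset (Fin 4)).card : ℚ) ∧
    (∀ i ∈ ({0, 1} : Finset (Fin 4)),
      busCost α (l i) (r i) T < busCost α (l i) (r i) S) := by
  have h1' : (0:ℚ) < 1 - α := by linarith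
  have key : (lam - 1) * (1 - α) = 2 * (1 + α) := by rw [hlam]; field_simp; ring
  have hmul : α * lam = lam - 3 - α := by nlinarith [key]
  have hpos : 0 < lam := by nlinarith
  have hlam3 : 3 < lam := by nlinarith
  have hx0 : xcount l r ((0:ℚ)) = 4 := by
    rw [xcount, Finset.card_filter, Finset.card_filter, Fin.sum_univ_four, Fin.sum_univ_four]
    simp only [hl, hr, Matrix.cons_val_zero, Matrix.cons_val_one, Matrix.head_cons,
      Matrix.cons_val_two, Matrix.tail_cons, Matrix.cons_val_three]
    rw [if_pos (by linarith), if_pos (by linarith), if_pos (by linarith), if_pos (by linarith), if_neg (by linarith), if_neg (by linarith), if_neg (by linarith), if_neg (by linarith)]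
    norm_num
  have hx1 : xcount l r (lam + 4) = 8 := by
    rw [xcount, Finset.card_filter, Finset.card_filter, Fin.sum_univ_four, Fin.sum_univ_four]
    simp only [hl, hr, Matrix.cons_val_zero, Matrix.cons_val_one, Matrix.head_cons,
      Matrix.cons_val_two, Matrix.tail_cons, Matrix.cons_val_three]
    rw [if_pos (by linarith), if_pos (by linarith), if_pos (by linarith), if_pos (by linarith), if_pos (by linarith), if_pos (by linarith), if_pos (by linarith), if_pos (by linarith)]
    norm_num
  have hx2 : xcount l r (lam) = 5 := by
    rw [xcount, Finset.card_filter, Finset.card_filter, Fin.sum_univ_four, Fin.sum_univ_four]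
    simp only [hl, hr, Matrix.cons_val_zero, Matrix.cons_val_one, Matrix.head_cons,
      Matrix.cons_val_two, Matrix.tail_cons, Matrix.cons_val_three]
    rw [if_pos (by linarith), if_pos (by linarith), if_pos (by linarith), if_pos (by linarith), if_pos (by linarith), if_neg (by linarith), if_neg (by linarith), if_neg (by linarith)]
    norm_num
  have hx3 : xcount l r (lam + 1) = 5 := by
    rw [xcount, Finset.card_filter, Finset.card_filter, Fin.sum_univ_four, Fin.sum_univ_four]
    simp only [hl, hr, Matrix.cons_val_zero, Matrix.cons_val_one, Matrix.head_cons,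
      Matrix.cons_val_two, Matrix.tail_cons, Matrix.cons_val_three]
    rw [if_pos (by linarith), if_pos (by linarith), if_pos (by linarith), if_pos (by linarith), if_pos (by linarith), if_neg (by linarith), if_neg (by linarith), if_neg (by linarith)]
    norm_num
  have hx4 : xcount l r (lam + 2) = 6 := by
    rw [xcount, Finset.card_filter, Finset.card_filter, Fin.sum_univ_four, Fin.sum_univ_four]
    simp only [hl, hr, Matrix.cons_val_zero, Matrix.cons_val_one, Matrix.head_cons,
      Matrix.cons_val_two, Matrix.tail_cons, Matrix.cons_val_three]
    rw [if_pos (by linarith), if_pos (by linarith), if_pos (by linarith), if_pos (by linarith), if_pos (by linarith), if_neg (by linarith), if_pos (by linarith), if_neg (by linarith)]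
    norm_num
  have hx5 : xcount l r (lam + 3) = 7 := by
    rw [xcount, Finset.card_filter, Finset.card_filter, Fin.sum_univ_four, Fin.sum_univ_four]
    simp only [hl, hr, Matrix.cons_val_zero, Matrix.cons_val_one, Matrix.head_cons,
      Matrix.cons_val_two, Matrix.tail_cons, Matrix.cons_val_three]
    rw [if_pos (by linarith), if_pos (by linarith), if_pos (by linarith), if_pos (by linarith), if_pos (by linarith), if_pos (by linarith), if_pos (by linarith), if_neg (by linarith)]
    norm_num
  have hx6 : xcount l r (-lam) = 3 := by
    rw [xcount, Finset.card_filter, Finset.card_filter, Fin.sum_univ_four, Fin.sum_univ_four]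
    simp only [hl, hr, Matrix.cons_val_zero, Matrix.cons_val_one, Matrix.head_cons,
      Matrix.cons_val_two, Matrix.tail_cons, Matrix.cons_val_three]
    rw [if_pos (by linarith), if_pos (by linarith), if_pos (by linarith), if_neg (by linarith), if_neg (by linarith), if_neg (by linarith), if_neg (by linarith), if_neg (by linarith)]
    norm_num
  have hx7 : xcount l r (-lam - 1) = 2 := by
    rw [xcount, Finset.card_filter, Finset.card_filter, Fin.sum_univ_four, Fin.sum_univ_four]
    simp only [hl, hr, Matrix.cons_val_zero, Matrix.cons_val_one, Matrix.head_cons,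
      Matrix.cons_val_two, Matrix.tail_cons, Matrix.cons_val_three]
    rw [if_pos (by linarith), if_neg (by linarith), if_pos (by linarith), if_neg (by linarith), if_neg (by linarith), if_neg (by linarith), if_neg (by linarith), if_neg (by linarith)]
    norm_num
  have hx8 : xcount l r (-lam - 2) = 2 := by
    rw [xcount, Finset.card_filter, Finset.card_filter, Fin.sum_univ_four, Fin.sum_univ_four]
    simp only [hl, hr, Matrix.cons_val_zero, Matrix.cons_val_one, Matrix.head_cons,
      Matrix.cons_val_two, Matrix.tail_cons, Matrix.cons_val_three]
    rw [if_pos (by linarith), if_neg (by linarith), if_pos (by linarith), if_neg (by linarith), if_neg (by linarith), if_neg (by linarith), if_neg (by linarith), if_neg (by linarith)]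
    norm_num
  have hx9 : xcount l r (-lam - 3) = 1 := by
    rw [xcount, Finset.card_filter, Finset.card_filter, Fin.sum_univ_four, Fin.sum_univ_four]
    simp only [hl, hr, Matrix.cons_val_zero, Matrix.cons_val_one, Matrix.head_cons,
      Matrix.cons_val_two, Matrix.tail_cons, Matrix.cons_val_three]
    rw [if_pos (by linarith), if_neg (by linarith), if_neg (by linarith), if_neg (by linarith), if_neg (by linarith), if_neg (by linarith), if_neg (by linarith), if_neg (by linarith)]
    norm_num
  have hx8' : xcount l r (-2 - lam) = 2 := by
    rw [show (-2 - lam : ℚ) = -lam - 2 by ring]; exact hx8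
  refine ⟨⟨fun k => if k = 1 then -2 - lam else if k = 2 then 0
      else if k = 3 then lam + 2 else lam + 4, ?_, ?_⟩, ?_, ?_⟩
  · intro k hk
    rw [Finset.mem_Icc] at hk
    obtain ⟨hk1, hk2⟩ := hk
    interval_cases k
    · refine ⟨?_, ?_, ?_⟩
      · show (-2 - lam : ℚ) ∈ V
        rw [hV, show (-2 - lam : ℚ) = -lam - 2 by ring]; simp
      · show 1 * (2 * 4 / 4) ≤ xcount l r (-2 - lam)
        rw [hx8']
      · show ∀ v ∈ V, 1 * (2 * 4 / 4) ≤ xcount l r v → (-2 - lam : ℚ) ≤ v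
        intro v hv
        rw [hV] at hv
        simp only [Finset.mem_insert, Finset.mem_singleton] at hv
        rcases hv with rfl | rfl | rfl | rfl | rfl | rfl | rfl | rfl | rfl | rfl <;>
          simp only [hx0, hx1, hx2, hx3, hx4, hx5, hx6, hx7, hx8, hx9] <;> intro h <;>
          first | linarith | (exfalso; omega)
    · refine ⟨?_, ?_, ?_⟩
      · show (0 : ℚ) ∈ V
        rw [hV]; simp
      · show 2 * (2 * 4 / 4) ≤ xcount l r (0 : ℚ)
        rw [hx0]
      · show ∀ v ∈ V, 2 * (2 * 4 / 4) ≤ xcount l r v → (0 : ℚ) ≤ v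
        intro v hv
        rw [hV] at hv
        simp only [Finset.mem_insert, Finset.mem_singleton] at hv
        rcases hv with rfl | rfl | rfl | rfl | rfl | rfl | rfl | rfl | rfl | rfl <;>
          simp only [hx0, hx1, hx2, hx3, hx4, hx5, hx6, hx7, hx8, hx9] <;> intro h <;>
          first | linarith | (exfalso; omega)
    · refine ⟨?_, ?_, ?_⟩
      · show (lam + 2 : ℚ) ∈ V
        rw [hV]; simp
      · show 3 * (2 * 4 / 4) ≤ xcount l r (lam + 2)
        rw [hx4]
      · show ∀ v ∈ V, 3 * (2 * 4 / 4) ≤ xcount l r v → (lam + 2 : ℚ) ≤ v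
        intro v hv
        rw [hV] at hv
        simp only [Finset.mem_insert, Finset.mem_singleton] at hv
        rcases hv with rfl | rfl | rfl | rfl | rfl | rfl | rfl | rfl | rfl | rfl <;>
          simp only [hx0, hx1, hx2, hx3, hx4, hx5, hx6, hx7, hx8, hx9] <;> intro h <;>
          first | linarith | (exfalso; omega)
    · refine ⟨?_, ?_, ?_⟩
      · show (lam + 4 : ℚ) ∈ V
        rw [hV]; simp
      · show 4 * (2 * 4 / 4) ≤ xcount l r (lam + 4)
        rw [hx1]
      · show ∀ v ∈ V, 4 * (2 * 4 / 4) ≤ xcount l r v → (lam + 4 : ℚ) ≤ v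
        intro v hv
        rw [hV] at hv
        simp only [Finset.mem_insert, Finset.mem_singleton] at hv
        rcases hv with rfl | rfl | rfl | rfl | rfl | rfl | rfl | rfl | rfl | rfl <;>
          simp only [hx0, hx1, hx2, hx3, hx4, hx5, hx6, hx7, hx8, hx9] <;> intro h <;>
          first | linarith | (exfalso; omega)
  · have hicc : Finset.Icc 1 4 = ({1, 2, 3, 4} : Finset ℕ) := by rfl
    rw [hicc, Finset.image_insert, Finset.image_insert, Finset.image_insert,
      Finset.image_singleton, hS]
    norm_num
  · have hc : ({0, 1} : Finset (Fin 4)).card = 2 := by decide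
    rw [hc]; norm_num
  · intro i hi
    fin_cases hi <;>
      simp only [hl, hr, Matrix.cons_val_zero, Matrix.cons_val_one, Matrix.head_cons]
    · exact agent_bound α lam _ _ h0 hlam3 hmul S T hS hT (Or.inl ⟨rfl, rfl⟩)
    · exact agent_bound α lam _ _ h0 hlam3 hmul S T hS hT (Or.inr ⟨rfl, rfl⟩)
end

section
/- For every α ∈ [0,1) there exists an instance of the α-bus stop problem such that no feasible solution provides strong justified representation. Concretely, take 8 agents, budget b = 4, V = {1,…,16}, and types ℓᵢ = 2i−1, rᵢ = 2i for i = 1,…,8. -/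
open Finset

lemma nat_abs_ge (a b : ℕ) (h : a ≠ b) : 1 ≤ |(a:ℚ) - b| := by
  have h' : (a:ℤ) ≠ (b:ℤ) := by exact_mod_cast h
  have h2 : (1:ℤ) ≤ |(a:ℤ) - b| := Int.one_le_abs (sub_ne_zero.mpr h')
  have h3 : ((1:ℤ):ℚ) ≤ ((|(a:ℤ) - b| : ℤ) : ℚ) := by exact_mod_cast h2
  push_cast at h3
  exact h3

lemma busCost_le (α ℓ r : ℚ) (T : Finset ℚ) : busCost α ℓ r T ≤ |ℓ - r| := by
  unfold busCost
  split
  · exact min_le_left _ _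
  · exact le_rfl

lemma busCost_pair (α : ℚ) (h0 : 0 ≤ α) (h1 : α < 1) (a : ℚ) :
    busCost α a (a + 1) ({a, a + 1} : Finset ℚ) = α := by
  have hne : ({a, a + 1} : Finset ℚ).Nonempty := ⟨a, by simp⟩
  unfold busCost
  rw [dif_pos hne]
  have habs : |a - (a + 1)| = 1 := by
    have : a - (a + 1) = -1 := by ring
    rw [this]; norm_num
  rw [habs]
  apply le_antisymm
  · apply min_le_of_right_le
    have hmem : ((a, a + 1) : ℚ × ℚ) ∈ ({a, a+1} : Finset ℚ) ×ˢ ({a, a+1} : Finset ℚ) := by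
      simp
    have := Finset.inf'_le (b := ((a, a+1) : ℚ × ℚ))
      (f := fun p : ℚ × ℚ => |a - p.1| + α * |p.1 - p.2| + |a + 1 - p.2|) hmem
    calc _ ≤ |a - a| + α * |a - (a+1)| + |a + 1 - (a+1)| := this
      _ = α := by rw [habs]; simp
  · apply le_min (le_of_lt h1)
    apply Finset.le_inf'
    rintro ⟨x, y⟩ hxy
    simp only [Finset.mem_product, Finset.mem_insert, Finset.mem_singleton] at hxy
    have e3 : |a + 1 - a| = 1 := by rw [show a + 1 - a = (1:ℚ) by ring]; norm_num
    obtain ⟨hx | hx, hy | hy⟩ := hxy <;> rw [hx, hy] <;>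
      simp only [sub_self, abs_zero, habs, e3, mul_zero, mul_one, add_zero, zero_add] <;> linarith

lemma busCost_uncov (α : ℚ) (h0 : 0 ≤ α) (p : ℕ) (S : Finset ℚ)
    (hS : ∀ x ∈ S, ∃ j : ℕ, x = (j:ℚ))
    (h : (p:ℚ) ∉ S ∨ ((p:ℚ) + 1) ∉ S) :
    busCost α (p:ℚ) ((p:ℚ) + 1) S = 1 := by
  have habs : |(p:ℚ) - ((p:ℚ) + 1)| = 1 := by
    have : (p:ℚ) - ((p:ℚ) + 1) = -1 := by ring
    rw [this]; norm_num
  unfold busCost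
  split
  case isTrue hne =>
    rw [habs]
    refine min_eq_left (Finset.le_inf' _ _ ?_)
    rintro ⟨x, y⟩ hxy
    simp only [Finset.mem_product] at hxy
    obtain ⟨hx, hy⟩ := hxy
    obtain ⟨jx, rfl⟩ := hS _ hx
    obtain ⟨jy, rfl⟩ := hS _ hy
    have hαnn : 0 ≤ α * |(jx:ℚ) - jy| := mul_nonneg h0 (abs_nonneg _)
    by_cases hxp : jx = p
    · subst hxp
      have hyp : jy ≠ jx + 1 := by
        rintro rfl
        rcases h with h | h
        · exact h hx
        · apply h
          have : ((jx:ℚ) + 1) = (((jx + 1 : ℕ)):ℚ) := by push_cast; ring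
          rw [this]; exact hy
      have := nat_abs_ge (jx + 1) jy (fun e => hyp e.symm)
      push_cast at this
      have h1' : (1:ℚ) ≤ |(jx:ℚ) + 1 - jy| := this
      have := abs_nonneg ((jx:ℚ) - jx)
      nlinarith [abs_nonneg ((jx:ℚ) - (jx:ℚ))]
    · have := nat_abs_ge p jx (fun e => hxp e.symm)
      have h1' : (1:ℚ) ≤ |(p:ℚ) - jx| := this
      nlinarith [abs_nonneg ((p:ℚ) + 1 - jy)]
  case isFalse => exact habs

/-- For every `α ∈ [0,1)`, the instance with 8 agents, budget 4, `V = {1,…,16}` and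
types `(2i-1, 2i)` for `i = 1,…,8` admits no feasible solution providing strong JR:
for every feasible `S` there are a coalition `M` of size at least `2n/b = 4` and a pair
`T ⊆ V` that is weakly improving for all of `M` and strictly improving for some member. -/
theorem stmt_13 (α : ℚ) (h0 : 0 ≤ α) (h1 : α < 1)
    (V : Finset ℚ) (hV : V = (Finset.Icc (1 : ℕ) 16).image (fun j : ℕ => (j : ℚ)))
    (l r : Fin 8 → ℚ)
    (hl : l = fun i => 2 * (i.val : ℚ) + 1)
    (hr : r = fun i => 2 * (i.val : ℚ) + 2) :
    ∀ S ⊆ V, S.card ≤ 4 →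
      ¬ (∀ M : Finset (Fin 8), (2 * 8 : ℚ) / 4 ≤ M.card →
          ∀ T ⊆ V, T.card = 2 →
            ((∃ i ∈ M, busCost α (l i) (r i) S < busCost α (l i) (r i) T) ∨
             (∀ i ∈ M, busCost α (l i) (r i) S ≤ busCost α (l i) (r i) T))) := by
  intro S hSV hScard hJR
  subst hl hr hV
  -- every element of S is a natural number cast
  have hSnat : ∀ x ∈ S, ∃ j : ℕ, x = (j:ℚ) := by
    intro x hx
    have := hSV hx
    simp only [Finset.mem_image] at this
    obtain ⟨j, _, rfl⟩ := this
    exact ⟨j, rfl⟩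
  -- the set of covered agents
  set C : Finset (Fin 8) := Finset.univ.filter
    (fun i => (2 * (i.val : ℚ) + 1) ∈ S ∧ (2 * (i.val : ℚ) + 2) ∈ S) with hC
  -- each covered agent gives two distinct stops of S
  have hdisj : ∀ i ∈ C, ∀ j ∈ C, i ≠ j →
      Disjoint ({2 * (i.val : ℚ) + 1, 2 * (i.val : ℚ) + 2} : Finset ℚ)
        ({2 * (j.val : ℚ) + 1, 2 * (j.val : ℚ) + 2} : Finset ℚ) := by
    intro i _ j _ hij
    have hvij : i.val ≠ j.val := fun e => hij (Fin.ext e)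
    rw [Finset.disjoint_left]
    intro x hx hx'
    simp only [Finset.mem_insert, Finset.mem_singleton] at hx hx'
    rcases hx with rfl | rfl
    · rcases hx' with e | e
      · exact absurd (by exact_mod_cast e : (2*i.val+1:ℕ) = 2*j.val+1) (by omega)
      · exact absurd (by exact_mod_cast e : (2*i.val+1:ℕ) = 2*j.val+2) (by omega)
    · rcases hx' with e | e
      · exact absurd (by exact_mod_cast e : (2*i.val+2:ℕ) = 2*j.val+1) (by omega)
      · exact absurd (by exact_mod_cast e : (2*i.val+2:ℕ) = 2*j.val+2) (by omega)
  -- counting: at most 2 covered agents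
  have hCcard : C.card ≤ 2 := by
    have hsub : C.biUnion (fun i => ({2 * (i.val : ℚ) + 1, 2 * (i.val : ℚ) + 2} : Finset ℚ)) ⊆ S := by
      intro x hx
      simp only [Finset.mem_biUnion] at hx
      obtain ⟨i, hiC, hx⟩ := hx
      simp only [hC, Finset.mem_filter] at hiC
      simp only [Finset.mem_insert, Finset.mem_singleton] at hx
      rcases hx with rfl | rfl
      · exact hiC.2.1
      · exact hiC.2.2
    have hcardB := Finset.card_biUnion hdisj
    have hpair : ∀ i : Fin 8, ({2 * (i.val : ℚ) + 1, 2 * (i.val : ℚ) + 2} : Finset ℚ).card = 2 := by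
      intro i
      rw [Finset.card_insert_of_notMem (by norm_num), Finset.card_singleton]
    rw [Finset.sum_congr rfl (fun i _ => hpair i), Finset.sum_const, smul_eq_mul] at hcardB
    have := Finset.card_le_card hsub
    omega
  -- uncovered agents
  set U : Finset (Fin 8) := Finset.univ \ C with hU
  have hUcard : 6 ≤ U.card := by
    have : U.card = 8 - C.card := by
      rw [hU, Finset.card_sdiff_of_subset (Finset.filter_subset _ _)]
      simp [hC]
    omega
  have hUne : U.Nonempty := Finset.card_pos.mp (by omega)
  obtain ⟨i₀, hi₀⟩ := hUne
  -- cost under S is 1 for uncovered agents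
  have hcostS : ∀ i ∈ U, busCost α (2 * (i.val : ℚ) + 1) (2 * (i.val : ℚ) + 2) S = 1 := by
    intro i hi
    have hiC : i ∉ C := (Finset.mem_sdiff.mp hi).2
    simp only [hC, Finset.mem_filter, Finset.mem_univ, true_and, not_and_or] at hiC
    have e1 : (2 * (i.val : ℚ) + 1) = (((2 * i.val + 1 : ℕ)):ℚ) := by push_cast; ring
    have e2 : (2 * (i.val : ℚ) + 2) = (((2 * i.val + 1 : ℕ)):ℚ) + 1 := by push_cast; ring
    rw [e1, e2]
    apply busCost_uncov α h0 _ S hSnat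
    rw [← e1, show 2 * (i.val : ℚ) + 1 + 1 = 2 * (i.val : ℚ) + 2 by ring]
    exact hiC
  -- the deviating pair
  set T : Finset ℚ := {2 * (i₀.val : ℚ) + 1, 2 * (i₀.val : ℚ) + 2} with hT
  have hTV : T ⊆ (Finset.Icc (1 : ℕ) 16).image (fun j : ℕ => (j : ℚ)) := by
    intro x hx
    simp only [hT, Finset.mem_insert, Finset.mem_singleton] at hx
    simp only [Finset.mem_image, Finset.mem_Icc]
    have hlt := i₀.isLt
    rcases hx with rfl | rfl
    · exact ⟨2 * i₀.val + 1, by omega, by push_cast; ring⟩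
    · exact ⟨2 * i₀.val + 2, by omega, by push_cast; ring⟩
  have hT2 : T.card = 2 := by
    rw [hT, Finset.card_insert_of_notMem (by norm_num), Finset.card_singleton]
  have hMcard : (2 * 8 : ℚ) / 4 ≤ (U.card : ℚ) := by
    have : (6 : ℚ) ≤ (U.card : ℚ) := by exact_mod_cast hUcard
    linarith
  -- cost under T
  have hcostTle : ∀ i : Fin 8, busCost α (2 * (i.val : ℚ) + 1) (2 * (i.val : ℚ) + 2) T ≤ 1 := by
    intro i
    have := busCost_le α (2 * (i.val : ℚ) + 1) (2 * (i.val : ℚ) + 2) T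
    have habs : |(2 * (i.val : ℚ) + 1) - (2 * (i.val : ℚ) + 2)| = 1 := by
      rw [show (2 * (i.val : ℚ) + 1) - (2 * (i.val : ℚ) + 2) = -1 by ring]; norm_num
    linarith [habs ▸ this]
  have hcostTi₀ : busCost α (2 * (i₀.val : ℚ) + 1) (2 * (i₀.val : ℚ) + 2) T = α := by
    have e : (2 * (i₀.val : ℚ) + 2) = (2 * (i₀.val : ℚ) + 1) + 1 := by ring
    rw [hT, e]
    exact busCost_pair α h0 h1 _
  rcases hJR U hMcard T hTV hT2 with ⟨j, hjU, hlt⟩ | hall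
  · rw [hcostS j hjU] at hlt
    exact absurd (lt_of_lt_of_le hlt (hcostTle j)) (lt_irrefl 1)
  · have := hall i₀ hi₀
    rw [hcostS i₀ hi₀, hcostTi₀] at this
    linarith
end
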